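/- arXiv:2505.00536 — 7 statements merged into one kernel-verified Lean document; each statement's English description precedes it below -/
import Mathlib

section
/- Let G be a k × m matrix over a finite field GF(s) and let D be the s^k × m array whose rows are x^T G for all x ∈ GF(s)^k. Then D is an orthogonal array of strength t (every t columns of D contain each t-tuple in GF(s)^t exactly s^{k−t} times) if and only if every t columns of G are linearly independent over GF(s). -/
/-!
The rows `xᵀG` restricted to the columns `c` are the values of the linear map
`x ↦ xᵀ G_c`, where `G_c` is the `k × t` submatrix on those columns. The fibres of a
homomorphism of finite groups are cosets of its kernel, so all nonempty fibres have the
same size; hence every `t`-tuple occurs exactly `s^k / s^t` times iff the map is onto,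
i.e. iff `G_c` has rank `t`, i.e. iff its columns are linearly independent.
-/

open Finset

section Fibers

variable {A B H : Type*} [AddGroup A] [Fintype A] [AddGroup B] [Fintype B] [DecidableEq B]
  [FunLike H A B] [AddMonoidHomClass H A B]

theorem AddMonoidHom.card_fiber_mul_card_eq_of_surjective {f : H} (hf : Function.Surjective f)
    (b : B) : #{a | f a = b} * Fintype.card B = Fintype.card A := by
  have hfibers : ∀ b', #{a | f a = b'} = #{a | f a = b} := fun b' =>
    AddMonoidHom.card_fiber_eq_of_mem_range f (hf b') (hf b)
  calc #{a | f a = b} * Fintype.card B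
      = ∑ b' : B, #{a | f a = b'} := by simp [hfibers, mul_comm]
    _ = Fintype.card A := (card_eq_sum_card_fiberwise fun a _ => mem_univ (f a)).symm

theorem AddMonoidHom.forall_card_fiber_mul_card_eq_iff_surjective (f : H) :
    (∀ b, #{a | f a = b} * Fintype.card B = Fintype.card A) ↔ Function.Surjective f := by
  refine ⟨fun h b => ?_, fun hf => card_fiber_mul_card_eq_of_surjective hf⟩
  have hpos : 0 < #{a | f a = b} :=
    Nat.pos_of_ne_zero fun h0 => (Fintype.card_ne_zero (α := A)) (by simpa [h0] using (h b).symm)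
  obtain ⟨a, ha⟩ := card_pos.mp hpos
  exact ⟨a, (mem_filter.mp ha).2⟩

end Fibers

theorem Matrix.vecMul_surjective_iff_linearIndependent_col {K m n : Type*} [Field K]
    [Fintype m] [Fintype n] (M : Matrix m n K) :
    Function.Surjective (fun x => M.vecMul x) ↔ LinearIndependent K M.col := by
  rw [linearIndependent_iff_card_eq_finrank_span, Set.finrank, ← rank_eq_finrank_span_cols,
    ← rank_transpose, rank, mulVecLin_transpose, ← coe_vecMulLinear, ← LinearMap.range_eq_top,
    Submodule.eq_top_iff_finrank_eq, Module.finrank_fintype_fun_eq_card, eq_comm]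

/-- The regular array with rows xᵀG, x ∈ GF(s)^k, has strength t (every t distinct
columns contain each t-tuple exactly s^{k-t} times, i.e. count * s^t = s^k) if and
only if every t columns of G are linearly independent over GF(s). -/
theorem stmt_3 (s k m t : ℕ) (F : Type*) [Field F] [Fintype F] [DecidableEq F]
    (hF : Fintype.card F = s) (G : Matrix (Fin k) (Fin m) F) :
    (∀ c : Fin t → Fin m, Function.Injective c →
        ∀ a : Fin t → F,
          (Finset.univ.filter (fun x : Fin k → F =>
            ∀ i, Matrix.vecMul x G (c i) = a i)).card * s ^ t = s ^ k)
      ↔ (∀ c : Fin t → Fin m, Function.Injective c →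
          LinearIndependent F (fun i => fun rI => G rI (c i))) := by
  have hcard : ∀ n, Fintype.card (Fin n → F) = s ^ n := by simp [hF]
  refine forall₂_congr fun c _ => ?_
  have key :=
    AddMonoidHom.forall_card_fiber_mul_card_eq_iff_surjective (G.submatrix id c).vecMulLinear
  rw [hcard, hcard, Matrix.coe_vecMulLinear,
    Matrix.vecMul_surjective_iff_linearIndependent_col] at key
  simp only [funext_iff] at key
  exact key
end

section
/- Let A be an r × c difference scheme over GF(s) (the componentwise difference of any two distinct columns of A contains every element of GF(s) equally often, i.e. r/s times) and let B be an N × n orthogonal array OA(N, n, s, 2). Then the Kronecker sum D = A ⊕ B, the (Nr) × (cn) array with entries D[(i,u),(j,v)] = A[i,j] + B[u,v] in GF(s), is an orthogonal array OA(Nr, cn, s, 2). -/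
/-- If A is a difference scheme DS(r,c,s) over GF(s) and B is an OA(N,n,s,2), then the
Kronecker sum D = A ⊕ B, with D[(i,u),(j,v)] = A[i,j] + B[u,v], is an OA(Nr, cn, s, 2). -/
theorem stmt_4 (s r c N n : ℕ) (F : Type*) [Field F] [Fintype F] [DecidableEq F]
    (hF : Fintype.card F = s)
    (A : Matrix (Fin r) (Fin c) F)
    (hA : ∀ j j' : Fin c, j ≠ j' → ∀ d : F,
      (Finset.univ.filter (fun i => A i j - A i j' = d)).card * s = r)
    (B : Matrix (Fin N) (Fin n) F) (hn : 2 ≤ n)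
    (hB : ∀ v v' : Fin n, v ≠ v' → ∀ a b : F,
      (Finset.univ.filter (fun u => B u v = a ∧ B u v' = b)).card * s ^ 2 = N) :
    ∀ p q : Fin c × Fin n, p ≠ q → ∀ a b : F,
      (Finset.univ.filter (fun x : Fin r × Fin N =>
        A x.1 p.1 + B x.2 p.2 = a ∧ A x.1 q.1 + B x.2 q.2 = b)).card * s ^ 2 = N * r := by
  have hs : 0 < s := hF ▸ Fintype.card_pos
  -- each symbol occurs N/s times in each column of B
  have hrow : ∀ (v : Fin n) (t : F),
      (Finset.univ.filter (fun u => B u v = t)).card * s = N := by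
    intro v t
    haveI : Nontrivial (Fin n) := Fin.nontrivial_iff_two_le.mpr hn
    obtain ⟨v', hv'⟩ := exists_ne v
    have hcard : (Finset.univ.filter (fun u => B u v = t)).card
        = ∑ b : F, (Finset.univ.filter (fun u => B u v = t ∧ B u v' = b)).card := by
      rw [Finset.card_eq_sum_card_fiberwise (f := fun u => B u v') (t := Finset.univ)
        (fun x _ => Finset.mem_univ _)]
      simp [Finset.filter_filter]
    have h2 : (Finset.univ.filter (fun u => B u v = t)).card * s * s = N * s := by
      rw [hcard, Finset.sum_mul, Finset.sum_mul]
      have : ∀ b : F, (Finset.univ.filter (fun u => B u v = t ∧ B u v' = b)).card * s * s = N := by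
        intro b
        rw [mul_assoc, ← sq]
        exact hB v v' hv'.symm t b
      rw [Finset.sum_congr rfl (fun b _ => this b), Finset.sum_const, Finset.card_univ, hF,
        smul_eq_mul, mul_comm]
    exact Nat.eq_of_mul_eq_mul_right hs h2
  rintro ⟨j, v⟩ ⟨j', v'⟩ hpq a b
  -- decompose the count over the product
  have hprod : (Finset.univ.filter (fun x : Fin r × Fin N =>
        A x.1 j + B x.2 v = a ∧ A x.1 j' + B x.2 v' = b)).card
      = ∑ i : Fin r, (Finset.univ.filter
          (fun u => A i j + B u v = a ∧ A i j' + B u v' = b)).card := by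
    rw [Finset.card_filter, ← Finset.univ_product_univ, Finset.sum_product]
    exact Finset.sum_congr rfl fun i _ => (Finset.card_filter _ _).symm
  rw [hprod]
  by_cases hv : v = v'
  · subst hv
    have hj : j ≠ j' := fun h => hpq (by simp [h])
    have key : ∀ i : Fin r,
        (Finset.univ.filter (fun u => A i j + B u v = a ∧ A i j' + B u v = b)).card * s ^ 2
          = if A i j - A i j' = a - b then N * s else 0 := by
      intro i
      by_cases h : A i j - A i j' = a - b
      · rw [if_pos h]
        have hfe : (Finset.univ.filter (fun u => A i j + B u v = a ∧ A i j' + B u v = b))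
            = (Finset.univ.filter (fun u => B u v = a - A i j)) := by
          apply Finset.filter_congr
          intro u _
          constructor
          · rintro ⟨h1, _⟩
            exact by linear_combination h1
          · intro h'
            exact ⟨by linear_combination h', by linear_combination h' - h⟩
        rw [hfe, sq, ← mul_assoc, hrow v (a - A i j)]
      · rw [if_neg h]
        have hfe : (Finset.univ.filter (fun u => A i j + B u v = a ∧ A i j' + B u v = b))
            = (∅ : Finset (Fin N)) := by
          apply Finset.filter_false_of_mem
          rintro u _ ⟨h1, h2⟩
          exact h (by linear_combination h1 - h2)
        rw [hfe]
        simp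
    rw [Finset.sum_mul, Finset.sum_congr rfl (fun i _ => key i), ← Finset.sum_filter,
      Finset.sum_const, smul_eq_mul]
    have hAd := hA j j' hj (a - b)
    calc (Finset.univ.filter (fun i => A i j - A i j' = a - b)).card * (N * s)
        = N * ((Finset.univ.filter (fun i => A i j - A i j' = a - b)).card * s) := by ring
      _ = N * r := by rw [hAd]
  · have key : ∀ i : Fin r,
        (Finset.univ.filter (fun u => A i j + B u v = a ∧ A i j' + B u v' = b)).card * s ^ 2
          = N := by
      intro i
      have hfe : (Finset.univ.filter (fun u => A i j + B u v = a ∧ A i j' + B u v' = b))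
          = (Finset.univ.filter (fun u => B u v = a - A i j ∧ B u v' = b - A i j')) := by
        apply Finset.filter_congr
        intro u _
        constructor
        · rintro ⟨h1, h2⟩
          exact ⟨by linear_combination h1, by linear_combination h2⟩
        · rintro ⟨h1, h2⟩
          exact ⟨by linear_combination h1, by linear_combination h2⟩
      rw [hfe]
      exact hB v v' hv (a - A i j) (b - A i j')
    rw [Finset.sum_mul, Finset.sum_congr rfl (fun i _ => key i), Finset.sum_const,
      Finset.card_univ, Fintype.card_fin, smul_eq_mul, mul_comm]
end

section
/- Let A be an r × c difference scheme over GF(s) and B an OA(N, n, s, 3). Let D = A ⊕ B. Consider three columns of D indexed (j₁,v₁), (j₂,v₂), (j₃,v₃). If the column indices v₁, v₂, v₃ of B are not all equal, then these three columns of D form an OA of strength 3 (every triple in GF(s)³ appears equally often). -/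
open Finset

lemma prodCount {r N : ℕ} (P : Fin r × Fin N → Prop) [DecidablePred P] :
    (Finset.univ.filter P).card = ∑ i : Fin r, (Finset.univ.filter (fun u => P (i, u))).card := by
  rw [Finset.card_filter, Fintype.sum_prod_type]
  exact Finset.sum_congr rfl fun i _ => (Finset.card_filter _ _).symm

lemma pairCount {s N n : ℕ} {F : Type*} [Field F] [Fintype F] [DecidableEq F]
    (hF : Fintype.card F = s)
    (B : Matrix (Fin N) (Fin n) F) (hn : 3 ≤ n)
    (hB : ∀ v₁ v₂ v₃ : Fin n, v₁ ≠ v₂ → v₁ ≠ v₃ → v₂ ≠ v₃ → ∀ a b e : F,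
      (Finset.univ.filter (fun u =>
        B u v₁ = a ∧ B u v₂ = b ∧ B u v₃ = e)).card * s ^ 3 = N)
    (v w : Fin n) (hvw : v ≠ w) (a b : F) :
    (Finset.univ.filter (fun u => B u v = a ∧ B u w = b)).card * s ^ 3 = N * s := by
  obtain ⟨w', hw'v, hw'w⟩ : ∃ w' : Fin n, w' ≠ v ∧ w' ≠ w := by
    by_contra h
    push_neg at h
    have hsub : (Finset.univ : Finset (Fin n)) ⊆ {v, w} := by
      intro x _
      simp only [Finset.mem_insert, Finset.mem_singleton]
      by_cases hx : x = v
      · exact Or.inl hx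
      · exact Or.inr (h x hx)
    have := Finset.card_le_card hsub
    simp only [Finset.card_univ, Fintype.card_fin] at this
    have h2 : ({v, w} : Finset (Fin n)).card ≤ 2 := by
      apply (Finset.card_insert_le _ _).trans; simp
    omega
  have key : (Finset.univ.filter (fun u => B u v = a ∧ B u w = b)).card
      = ∑ e : F, (Finset.univ.filter (fun u => B u v = a ∧ B u w = b ∧ B u w' = e)).card := by
    simp only [Finset.card_filter]
    rw [Finset.sum_comm]
    refine Finset.sum_congr rfl fun u _ => ?_
    by_cases h : B u v = a ∧ B u w = b
    · obtain ⟨h1, h2⟩ := h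
      simp [h1, h2]
    · rw [if_neg h, Finset.sum_eq_zero]
      intro e _
      rw [if_neg]
      tauto
  rw [key, Finset.sum_mul]
  have : ∀ e : F, (Finset.univ.filter (fun u => B u v = a ∧ B u w = b ∧ B u w' = e)).card * s ^ 3 = N := by
    intro e
    exact hB v w w' hvw (Ne.symm hw'v) (Ne.symm hw'w) a b e
  rw [Finset.sum_congr rfl fun e _ => this e]
  simp [hF, mul_comm]

lemma aux3 {s r c N n : ℕ} {F : Type*} [Field F] [Fintype F] [DecidableEq F]
    (A : Matrix (Fin r) (Fin c) F) (B : Matrix (Fin N) (Fin n) F)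
    (hB : ∀ v₁ v₂ v₃ : Fin n, v₁ ≠ v₂ → v₁ ≠ v₃ → v₂ ≠ v₃ → ∀ a b e : F,
      (Finset.univ.filter (fun u =>
        B u v₁ = a ∧ B u v₂ = b ∧ B u v₃ = e)).card * s ^ 3 = N)
    (j₁ j₂ j₃ : Fin c) (v₁ v₂ v₃ : Fin n)
    (h12 : v₁ ≠ v₂) (h13 : v₁ ≠ v₃) (h23 : v₂ ≠ v₃) (a b e : F) :
    (Finset.univ.filter (fun x : Fin r × Fin N =>
        A x.1 j₁ + B x.2 v₁ = a ∧ A x.1 j₂ + B x.2 v₂ = b ∧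
          A x.1 j₃ + B x.2 v₃ = e)).card * s ^ 3 = N * r := by
  rw [prodCount, Finset.sum_mul]
  have step : ∀ i : Fin r,
      (Finset.univ.filter (fun u : Fin N =>
        A i j₁ + B u v₁ = a ∧ A i j₂ + B u v₂ = b ∧ A i j₃ + B u v₃ = e)).card * s ^ 3 = N := by
    intro i
    have heq : (Finset.univ.filter (fun u : Fin N =>
        A i j₁ + B u v₁ = a ∧ A i j₂ + B u v₂ = b ∧ A i j₃ + B u v₃ = e))
        = (Finset.univ.filter (fun u : Fin N =>
        B u v₁ = a - A i j₁ ∧ B u v₂ = b - A i j₂ ∧ B u v₃ = e - A i j₃)) := by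
      ext u
      simp only [Finset.mem_filter, Finset.mem_univ, true_and]
      constructor
      · rintro ⟨h1, h2, h3⟩
        exact ⟨by linear_combination h1, by linear_combination h2, by linear_combination h3⟩
      · rintro ⟨h1, h2, h3⟩
        exact ⟨by linear_combination h1, by linear_combination h2, by linear_combination h3⟩
    rw [heq]
    exact hB v₁ v₂ v₃ h12 h13 h23 _ _ _
  rw [Finset.sum_congr rfl fun i _ => step i]
  simp [mul_comm]

lemma aux2 {s r c N n : ℕ} {F : Type*} [Field F] [Fintype F] [DecidableEq F]
    (hF : Fintype.card F = s)
    (A : Matrix (Fin r) (Fin c) F)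
    (hA : ∀ j j' : Fin c, j ≠ j' → ∀ d : F,
      (Finset.univ.filter (fun i => A i j - A i j' = d)).card * s = r)
    (B : Matrix (Fin N) (Fin n) F) (hn : 3 ≤ n)
    (hB : ∀ v₁ v₂ v₃ : Fin n, v₁ ≠ v₂ → v₁ ≠ v₃ → v₂ ≠ v₃ → ∀ a b e : F,
      (Finset.univ.filter (fun u =>
        B u v₁ = a ∧ B u v₂ = b ∧ B u v₃ = e)).card * s ^ 3 = N)
    (j j' j'' : Fin c) (v w : Fin n) (hj : j ≠ j') (hvw : v ≠ w) (a b e : F) :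
    (Finset.univ.filter (fun x : Fin r × Fin N =>
        A x.1 j + B x.2 v = a ∧ A x.1 j' + B x.2 v = b ∧
          A x.1 j'' + B x.2 w = e)).card * s ^ 3 = N * r := by
  rw [prodCount, Finset.sum_mul]
  have step : ∀ i : Fin r,
      (Finset.univ.filter (fun u : Fin N =>
        A i j + B u v = a ∧ A i j' + B u v = b ∧ A i j'' + B u w = e)).card * s ^ 3
      = if A i j - A i j' = a - b then N * s else 0 := by
    intro i
    by_cases hi : A i j - A i j' = a - b
    · rw [if_pos hi]
      have heq : (Finset.univ.filter (fun u : Fin N =>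
          A i j + B u v = a ∧ A i j' + B u v = b ∧ A i j'' + B u w = e))
          = (Finset.univ.filter (fun u : Fin N =>
          B u v = a - A i j ∧ B u w = e - A i j'')) := by
        ext u
        simp only [Finset.mem_filter, Finset.mem_univ, true_and]
        constructor
        · rintro ⟨h1, h2, h3⟩
          exact ⟨by linear_combination h1, by linear_combination h3⟩
        · rintro ⟨h1, h2⟩
          exact ⟨by linear_combination h1, by linear_combination h1 - hi,
            by linear_combination h2⟩
      rw [heq]
      exact pairCount hF B hn hB v w hvw _ _
    · rw [if_neg hi]
      have heq : (Finset.univ.filter (fun u : Fin N =>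
          A i j + B u v = a ∧ A i j' + B u v = b ∧ A i j'' + B u w = e)) = ∅ := by
        rw [Finset.filter_eq_empty_iff]
        rintro u _ ⟨h1, h2, h3⟩
        exact hi (by linear_combination h1 - h2)
      rw [heq]
      simp
  rw [Finset.sum_congr rfl fun i _ => step i]
  rw [Finset.sum_ite, Finset.sum_const_zero, add_zero, Finset.sum_const, smul_eq_mul]
  have := hA j j' hj (a - b)
  calc (Finset.univ.filter (fun i => A i j - A i j' = a - b)).card * (N * s)
      = ((Finset.univ.filter (fun i => A i j - A i j' = a - b)).card * s) * N := by ring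
    _ = N * r := by rw [this]; ring

/-- In D = A ⊕ B with A a difference scheme DS(r,c,s) and B an OA(N,n,s,3): any three
distinct columns (j₁,v₁), (j₂,v₂), (j₃,v₃) whose B-indices v₁,v₂,v₃ are not all equal
form a strength-3 triple: each triple of GF(s)³ appears exactly Nr/s³ times. -/
theorem stmt_6 (s r c N n : ℕ) (F : Type*) [Field F] [Fintype F] [DecidableEq F]
    (hF : Fintype.card F = s)
    (A : Matrix (Fin r) (Fin c) F)
    (hA : ∀ j j' : Fin c, j ≠ j' → ∀ d : F,
      (Finset.univ.filter (fun i => A i j - A i j' = d)).card * s = r)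
    (B : Matrix (Fin N) (Fin n) F) (hn : 3 ≤ n)
    (hB : ∀ v₁ v₂ v₃ : Fin n, v₁ ≠ v₂ → v₁ ≠ v₃ → v₂ ≠ v₃ → ∀ a b e : F,
      (Finset.univ.filter (fun u =>
        B u v₁ = a ∧ B u v₂ = b ∧ B u v₃ = e)).card * s ^ 3 = N)
    (j₁ j₂ j₃ : Fin c) (v₁ v₂ v₃ : Fin n)
    (hd12 : (j₁, v₁) ≠ (j₂, v₂)) (hd13 : (j₁, v₁) ≠ (j₃, v₃)) (hd23 : (j₂, v₂) ≠ (j₃, v₃))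
    (hv : ¬(v₁ = v₂ ∧ v₂ = v₃)) :
    ∀ a b e : F,
      (Finset.univ.filter (fun x : Fin r × Fin N =>
        A x.1 j₁ + B x.2 v₁ = a ∧ A x.1 j₂ + B x.2 v₂ = b ∧
          A x.1 j₃ + B x.2 v₃ = e)).card * s ^ 3 = N * r := by
  intro a b e
  by_cases h12 : v₁ = v₂
  · -- v₁ = v₂, so v₃ ≠ v₂ and j₁ ≠ j₂
    subst h12
    have hj : j₁ ≠ j₂ := fun h => hd12 (by rw [h])
    have hv3 : v₁ ≠ v₃ := fun h => hv ⟨rfl, h⟩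
    exact aux2 hF A hA B hn hB j₁ j₂ j₃ v₁ v₃ hj hv3 a b e
  · by_cases h13 : v₁ = v₃
    · -- v₁ = v₃, columns 1 and 3 share B-column
      subst h13
      have hj : j₁ ≠ j₃ := fun h => hd13 (by rw [h])
      have heq : (Finset.univ.filter (fun x : Fin r × Fin N =>
          A x.1 j₁ + B x.2 v₁ = a ∧ A x.1 j₂ + B x.2 v₂ = b ∧ A x.1 j₃ + B x.2 v₁ = e))
          = (Finset.univ.filter (fun x : Fin r × Fin N =>
          A x.1 j₁ + B x.2 v₁ = a ∧ A x.1 j₃ + B x.2 v₁ = e ∧ A x.1 j₂ + B x.2 v₂ = b)) := by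
        ext x
        simp only [Finset.mem_filter, Finset.mem_univ, true_and]
        tauto
      rw [heq]
      exact aux2 hF A hA B hn hB j₁ j₃ j₂ v₁ v₂ hj h12 a e b
    · by_cases h23 : v₂ = v₃
      · -- v₂ = v₃, columns 2 and 3 share B-column
        subst h23
        have hj : j₂ ≠ j₃ := fun h => hd23 (by rw [h])
        have heq : (Finset.univ.filter (fun x : Fin r × Fin N =>
            A x.1 j₁ + B x.2 v₁ = a ∧ A x.1 j₂ + B x.2 v₂ = b ∧ A x.1 j₃ + B x.2 v₂ = e))
            = (Finset.univ.filter (fun x : Fin r × Fin N =>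
            A x.1 j₂ + B x.2 v₂ = b ∧ A x.1 j₃ + B x.2 v₂ = e ∧ A x.1 j₁ + B x.2 v₁ = a)) := by
          ext x
          simp only [Finset.mem_filter, Finset.mem_univ, true_and]
          tauto
        rw [heq]
        exact aux2 hF A hA B hn hB j₂ j₃ j₁ v₂ v₁ hj (fun h => h12 h.symm) b e a
      · exact aux3 A B hB j₁ j₂ j₃ v₁ v₂ v₃ h12 h13 h23 a b e
end

section
/- Let s be a prime power, β a primitive element of GF(s⁴), m = s² + 1, g = s + 1. For i = 0, 1, …, g − 1, let C_i = {β^{jg + i} : j = 0, 1, …, m − 1}. Then the sets C_0, C_1, …, C_{g−1} partition the (s⁴−1)/(s−1) = s³ + s² + s + 1 representative points {β^0, …, β^{s³+s²+s}} of PG(3, s), and each C_i is a cap: any three elements of C_i are linearly independent over GF(s). -/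
section Aux

variable {F : Type*} [Field F]

private lemma ebert_arith (s : ℕ) (hs : 2 ≤ s) :
    (s^2+1) * ((s+1)*(s-1)) = s^4 - 1 ∧ s^3+s^2+s+1 ≤ s^4 - 1 := by
  obtain ⟨u, rfl⟩ : ∃ u, s = u + 2 := ⟨s - 2, by omega⟩
  have h4 : 1 ≤ (u+2)^4 := Nat.one_le_pow _ _ (by omega)
  constructor
  · zify [show 1 ≤ u + 2 by omega, h4]
    ring
  · zify [h4]
    nlinarith [pow_pos (show (0:ℤ) < u+2 by omega) 3, sq_nonneg ((u:ℤ)+2)]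

private lemma ebert_pow_inj {β : F} (hβ0 : β ≠ 0) {M : ℕ} (hβ : orderOf β = M)
    {a b : ℕ} (ha : a < M) (hb : b < M) (h : β ^ a = β ^ b) : a = b := by
  have h2 : a ≡ b [MOD orderOf (Units.mk0 β hβ0)] := by
    apply pow_eq_pow_iff_modEq.mp
    ext
    simpa using h
  rw [← orderOf_units, Units.val_mk0, hβ] at h2
  unfold Nat.ModEq at h2
  rwa [Nat.mod_eq_of_lt ha, Nat.mod_eq_of_lt hb] at h2

private lemma ebert_noK (s : ℕ) (hs : 2 ≤ s) {β : F} (hβ0 : β ≠ 0)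
    (hβ : orderOf β = s^4 - 1)
    {u v : ℕ} (hu : u < s^2+1) (hv : v < s^2+1) (huv : u ≠ v)
    {k : F} (hk0 : k ≠ 0) (hk : k ^ s = k)
    (h : β ^ (u*(s+1)) = k * β ^ (v*(s+1))) : False := by
  obtain ⟨harith, _⟩ := ebert_arith s hs
  have hpos : 0 < (s+1)*(s-1) := Nat.mul_pos (by omega) (by omega)
  have hk1 : k ^ (s-1) = 1 := by
    have h1 : k ^ (s-1) * k = 1 * k := by
      rw [one_mul, ← pow_succ, show s - 1 + 1 = s by omega, hk]
    exact mul_right_cancel₀ hk0 h1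
  have h2 := congrArg (· ^ (s-1)) h
  simp only [mul_pow, hk1, one_mul, ← pow_mul] at h2
  have hb1 : u*(s+1)*(s-1) < s^4 - 1 := by
    rw [mul_assoc, ← harith]
    exact Nat.mul_lt_mul_of_lt_of_le hu (le_refl _) hpos
  have hb2 : v*(s+1)*(s-1) < s^4 - 1 := by
    rw [mul_assoc, ← harith]
    exact Nat.mul_lt_mul_of_lt_of_le hv (le_refl _) hpos
  have heq := ebert_pow_inj hβ0 hβ hb1 hb2 h2
  rw [mul_assoc, mul_assoc] at heq
  exact huv (Nat.eq_of_mul_eq_mul_right hpos heq)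

end Aux

section Key

variable {F : Type*} [Field F]

private lemma ebert_pair (s : ℕ) (hs : 2 ≤ s) {β : F} (hβ0 : β ≠ 0)
    (hβ : orderOf β = s^4 - 1)
    (frob : ∀ x y : F, (x+y)^s = x^s + y^s)
    {u v : ℕ} (hu : u < s^2+1) (hv : v < s^2+1) (huv : u ≠ v)
    {b c : F} (hb : b ^ s = b) (hc : c ^ s = c)
    (h : b * β ^ (u*(s+1)) + c * β ^ (v*(s+1)) = 0) : b = 0 ∧ c = 0 := by
  have hs0 : s ≠ 0 := by omega
  have frobneg : ∀ t : F, (-t)^s = -(t^s) := by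
    intro t
    have h0 := frob t (-t)
    rw [add_neg_cancel, zero_pow hs0] at h0
    linear_combination -h0
  by_cases hb0 : b = 0
  · subst hb0
    simp only [zero_mul, zero_add, mul_eq_zero] at h
    exact ⟨rfl, h.resolve_right (pow_ne_zero _ hβ0)⟩
  · exfalso
    have hc0 : c ≠ 0 := by
      rintro rfl
      simp only [zero_mul, add_zero, mul_eq_zero] at h
      exact hb0 (h.resolve_right (pow_ne_zero _ hβ0))
    set k : F := -(c * b⁻¹) with hk_def
    have hk0 : k ≠ 0 := by
      simp [hk_def, hc0, hb0]
    have hks : k ^ s = k := by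
      rw [hk_def, frobneg, mul_pow, inv_pow, hb, hc]
    apply ebert_noK s hs hβ0 hβ hu hv huv hk0 hks
    have hbinv : b * b⁻¹ = 1 := mul_inv_cancel₀ hb0
    rw [hk_def]
    linear_combination b⁻¹ * h - β ^ (u*(s+1)) * hbinv
end Key

section Core
variable {F : Type*} [Field F]

private lemma ebert_core (s : ℕ) (hs : 2 ≤ s)
    (frob : ∀ x y : F, (x+y)^s = x^s + y^s)
    {X Y Z a b c : F}
    (hX0 : X ≠ 0) (hY0 : Y ≠ 0) (hZ0 : Z ≠ 0)
    (hNX : (X^(s^2+1))^s = X^(s^2+1))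
    (hNY : (Y^(s^2+1))^s = Y^(s^2+1))
    (hNZ : (Z^(s^2+1))^s = Z^(s^2+1))
    (ha0 : a ≠ 0) (hb0 : b ≠ 0) (hc0 : c ≠ 0)
    (ha : a^s = a) (hb : b^s = b) (hc : c^s = c)
    (hrel : a*X + b*Y + c*Z = 0) :
    ∃ k : F, k ≠ 0 ∧ k^s = k ∧ Y = k * X := by
  have hs0 : s ≠ 0 := by omega
  have frobneg : ∀ t : F, (-t)^s = -(t^s) := by
    intro t
    have h0 := frob t (-t)
    rw [add_neg_cancel, zero_pow hs0] at h0
    linear_combination -h0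
  have frobsub : ∀ x y : F, (x - y)^s = x^s - y^s := by
    intro x y
    rw [sub_eq_add_neg, frob, frobneg, ← sub_eq_add_neg]
  have frobinj : ∀ x y : F, x^s = y^s → x = y := by
    intro x y hxy
    have h0 : (x - y)^s = 0 := by rw [frobsub, hxy, sub_self]
    have := pow_eq_zero_iff hs0 |>.mp h0
    linear_combination this
  have hexp : ∀ x y z : F, (x + y + z)^s = x^s + y^s + z^s := by
    intro x y z; rw [frob, frob]
  have hps : ∀ t : F, t^(s^2+1) = (t^s)^s * t := by
    intro t
    rw [pow_succ, pow_two, pow_mul]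
  obtain ⟨w, hw_def⟩ : ∃ w : F, w = Y * X⁻¹ := ⟨_, rfl⟩
  obtain ⟨v, hv_def⟩ : ∃ v : F, v = Z * X⁻¹ := ⟨_, rfl⟩
  have hXinv : X * X⁻¹ = 1 := mul_inv_cancel₀ hX0
  have hcinv : c * c⁻¹ = 1 := mul_inv_cancel₀ hc0
  have hw0 : w ≠ 0 := by rw [hw_def]; exact mul_ne_zero hY0 (inv_ne_zero hX0)
  obtain ⟨α, hα_def⟩ : ∃ α : F, α = -(a * c⁻¹) := ⟨_, rfl⟩
  obtain ⟨γ, hγ_def⟩ : ∃ γ : F, γ = -(b * c⁻¹) := ⟨_, rfl⟩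
  have hα0 : α ≠ 0 := by simp [hα_def, ha0, hc0]
  have hγ0 : γ ≠ 0 := by simp [hγ_def, hb0, hc0]
  have hαs : α^s = α := by rw [hα_def, frobneg, mul_pow, inv_pow, ha, hc]
  have hγs : γ^s = γ := by rw [hγ_def, frobneg, mul_pow, inv_pow, hb, hc]
  have hveq : v = α + γ * w := by
    rw [hv_def, hw_def, hα_def, hγ_def]
    linear_combination X⁻¹*c⁻¹*hrel - a*c⁻¹*hXinv - Z*X⁻¹*hcinv
  have hpow_w : ∀ m : ℕ, w^m = Y^m * (X^m)⁻¹ := by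
    intro m; rw [hw_def, mul_pow, inv_pow]
  have hpow_v : ∀ m : ℕ, v^m = Z^m * (X^m)⁻¹ := by
    intro m; rw [hv_def, mul_pow, inv_pow]
  have hnw : (w^(s^2+1))^s = w^(s^2+1) := by
    rw [hpow_w, mul_pow, inv_pow, hNX, hNY]
  have hnv : (v^(s^2+1))^s = v^(s^2+1) := by
    rw [hpow_v, mul_pow, inv_pow, hNX, hNZ]
  have hvs : v^s = α + γ * w^s := by
    rw [hveq, frob, hαs, mul_pow, hγs]
  have hvs2 : (v^s)^s = α + γ * (w^s)^s := by
    rw [hvs, frob, hαs, mul_pow, hγs]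
  have hE1 : v^(s^2+1) = α*α + α*γ*(w + (w^s)^s) + γ*γ*((w^s)^s * w) := by
    rw [hps, hvs2, hveq]; ring
  have hnw' : ((w^s)^s * w)^s = (w^s)^s * w := by
    rw [← hps w]; exact hnw
  have hA : (α*α)^s = α*α := by rw [mul_pow, hαs]
  have hB : (α*γ*(w + (w^s)^s))^s = α*γ*((w + (w^s)^s)^s) := by
    rw [mul_pow (α*γ) (w + (w^s)^s) s, mul_pow α γ s, hαs, hγs]
  have hCt : (γ*γ*((w^s)^s * w))^s = γ*γ*((w^s)^s * w) := by
    rw [mul_pow (γ*γ) ((w^s)^s * w) s, mul_pow γ γ s, hγs, hnw']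
  have htr : (w + (w^s)^s)^s = w + (w^s)^s := by
    have h2 : α*α + α*γ*((w + (w^s)^s)^s) + γ*γ*((w^s)^s * w) =
        α*α + α*γ*(w + (w^s)^s) + γ*γ*((w^s)^s * w) := by
      calc α*α + α*γ*((w + (w^s)^s)^s) + γ*γ*((w^s)^s * w)
          = (α*α + α*γ*(w + (w^s)^s) + γ*γ*((w^s)^s * w))^s := by
            rw [hexp, hA, hB, hCt]
        _ = (v^(s^2+1))^s := by rw [← hE1]
        _ = v^(s^2+1) := hnv
        _ = _ := hE1
    have h3 : α*γ*((w + (w^s)^s)^s) = α*γ*(w + (w^s)^s) := by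
      linear_combination h2
    exact mul_left_cancel₀ (mul_ne_zero hα0 hγ0) h3
  have hq1 : w*w = (w + (w^s)^s)*w - (w^s)^s*w := by ring
  have hq2 : w^s*w^s = (w + (w^s)^s)*(w^s) - (w^s)^s*w := by
    calc w^s * w^s = (w*w)^s := (mul_pow w w s).symm
      _ = ((w + (w^s)^s)*w - (w^s)^s*w)^s := by rw [hq1]
      _ = ((w + (w^s)^s)*w)^s - ((w^s)^s*w)^s := frobsub _ _
      _ = (w + (w^s)^s)^s * w^s - ((w^s)^s*w)^s := by
            rw [mul_pow (w + (w^s)^s) w s]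
      _ = (w + (w^s)^s) * w^s - (w^s)^s*w := by rw [htr, hnw']
  have hfac : (w - w^s) * ((w + w^s) - (w + (w^s)^s)) = 0 := by
    linear_combination hq1 - hq2
  have hwfix : w^s = w := by
    rcases mul_eq_zero.mp hfac with h4 | h4
    · linear_combination -h4
    · have h5 : w^s = (w^s)^s := by linear_combination h4
      exact (frobinj w (w^s) h5).symm
  refine ⟨w, hw0, hwfix, ?_⟩
  rw [hw_def, mul_assoc, inv_mul_cancel₀ hX0, mul_one]

end Core

section KeyFull
variable {F : Type*} [Field F]

private lemma ebert_Nfix (s : ℕ) (hs : 2 ≤ s) {β : F}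
    (hβ : orderOf β = s^4 - 1) (j : ℕ) :
    ((β ^ (j*(s+1)))^(s^2+1))^s = (β ^ (j*(s+1)))^(s^2+1) := by
  have h1 : ((β ^ (j*(s+1)))^(s^2+1))^(s-1) = 1 := by
    rw [← pow_mul, ← pow_mul]
    have he : j*(s+1)*((s^2+1)*(s-1)) = (s^4-1) * j := by
      rw [← (ebert_arith s hs).1]; ring
    rw [he, pow_mul, ← hβ, pow_orderOf_eq_one, one_pow]
  obtain ⟨t, ht⟩ : ∃ t : F, t = (β ^ (j*(s+1)))^(s^2+1) := ⟨_, rfl⟩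
  rw [← ht] at h1 ⊢
  conv_lhs => rw [show s = (s-1)+1 by omega]
  rw [pow_succ, h1, one_mul]

private lemma ebert_key (s : ℕ) (hs : 2 ≤ s) {β : F} (hβ0 : β ≠ 0)
    (hβ : orderOf β = s^4 - 1)
    (frob : ∀ x y : F, (x+y)^s = x^s + y^s)
    {j1 j2 j3 : ℕ} (hj1 : j1 < s^2+1) (hj2 : j2 < s^2+1) (hj3 : j3 < s^2+1)
    (h12 : j1 ≠ j2) (h13 : j1 ≠ j3) (h23 : j2 ≠ j3)
    {a b c : F} (ha : a^s = a) (hb : b^s = b) (hc : c^s = c)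
    (hrel : a * β^(j1*(s+1)) + b * β^(j2*(s+1)) + c * β^(j3*(s+1)) = 0) :
    a = 0 ∧ b = 0 ∧ c = 0 := by
  by_cases ha0 : a = 0
  · subst ha0
    have h := ebert_pair s hs hβ0 hβ frob hj2 hj3 h23 hb hc
      (by linear_combination hrel)
    exact ⟨rfl, h.1, h.2⟩
  by_cases hb0 : b = 0
  · subst hb0
    have h := ebert_pair s hs hβ0 hβ frob hj1 hj3 h13 ha hc
      (by linear_combination hrel)
    exact absurd h.1 ha0
  by_cases hc0 : c = 0
  · subst hc0
    have h := ebert_pair s hs hβ0 hβ frob hj1 hj2 h12 ha hb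
      (by linear_combination hrel)
    exact absurd h.1 ha0
  exfalso
  obtain ⟨k, hk0, hks, hkY⟩ := ebert_core s hs frob
    (pow_ne_zero (j1*(s+1)) hβ0) (pow_ne_zero (j2*(s+1)) hβ0)
    (pow_ne_zero (j3*(s+1)) hβ0)
    (ebert_Nfix s hs hβ j1) (ebert_Nfix s hs hβ j2) (ebert_Nfix s hs hβ j3)
    ha0 hb0 hc0 ha hb hc hrel
  exact ebert_noK s hs hβ0 hβ hj2 hj1 (Ne.symm h12) hk0 hks hkY

end KeyFull

/-- Ebert's partition: for β a primitive element of GF(s⁴), m = s²+1, g = s+1, the sets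
C_i = {β^{jg+i} : j = 0,…,m-1}, i = 0,…,g-1, partition the s³+s²+s+1 representative
points β^0, …, β^{s³+s²+s} of PG(3,s), and each C_i is a cap: any three of its elements
are linearly independent over GF(s). -/
theorem stmt_12 (s : ℕ) (K F : Type*) [Field K] [Field F] [Algebra K F]
    [Fintype K] [Fintype F] (hK : Fintype.card K = s) (hF : Fintype.card F = s ^ 4)
    (β : F) (hβ : orderOf β = s ^ 4 - 1)
    (C : Fin (s + 1) → Set F)
    (hC : ∀ i, C i = {x | ∃ j : ℕ, j < s ^ 2 + 1 ∧ x = β ^ (j * (s + 1) + (i : ℕ))}) :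
    ((⋃ i, C i) = {x | ∃ a : ℕ, a < s ^ 3 + s ^ 2 + s + 1 ∧ x = β ^ a}) ∧
    (Pairwise fun i i' => Disjoint (C i) (C i')) ∧
    (∀ i, ∀ x y z : F, x ∈ C i → y ∈ C i → z ∈ C i →
      x ≠ y → x ≠ z → y ≠ z → LinearIndependent K ![x, y, z]) := by
  have hs2 : 2 ≤ s := by
    have h := Fintype.one_lt_card (α := K)
    omega
  obtain ⟨harith1, harith3⟩ := ebert_arith s hs2
  have hβ0 : β ≠ 0 := by
    intro h
    have h1 : β ^ (s^4-1) = 1 := by rw [← hβ]; exact pow_orderOf_eq_one β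
    have h2 : 0 < s^3+s^2+s+1 := by positivity
    rw [h, zero_pow (show s^4 - 1 ≠ 0 by omega)] at h1
    exact one_ne_zero h1.symm
  -- frobenius x ↦ x^s is additive on F
  haveI : CharP K (ringChar K) := ringChar.charP K
  have hprime : (ringChar K).Prime := CharP.char_is_prime K (ringChar K)
  obtain ⟨n, hpn, hcard⟩ := FiniteField.card K (ringChar K)
  haveI : CharP F (ringChar K) :=
    charP_of_injective_ringHom (algebraMap K F).injective (ringChar K)
  haveI : Fact (ringChar K).Prime := ⟨hprime⟩
  have frob : ∀ x y : F, (x + y)^s = x^s + y^s := by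
    intro x y
    rw [← hK, hcard]
    exact add_pow_char_pow x y (ringChar K) (n : ℕ)
  have hfixK : ∀ t : K, (algebraMap K F t)^s = algebraMap K F t := by
    intro t
    rw [← map_pow, ← hK, FiniteField.pow_card]
  refine ⟨?_, ?_, ?_⟩
  · -- union
    ext x
    simp only [Set.mem_iUnion, hC, Set.mem_setOf_eq]
    constructor
    · rintro ⟨i, j, hj, rfl⟩
      refine ⟨j*(s+1) + (i : ℕ), ?_, rfl⟩
      have hi := i.isLt
      have h1 : j*(s+1) ≤ s^2*(s+1) := Nat.mul_le_mul_right (s+1) (by omega)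
      have h2 : s^2*(s+1) = s^3+s^2 := by ring
      omega
    · rintro ⟨A, hA, rfl⟩
      have hd := Nat.div_add_mod A (s+1)
      have hm : A % (s+1) < s+1 := Nat.mod_lt _ (by omega)
      refine ⟨⟨A % (s+1), hm⟩, A/(s+1), ?_, ?_⟩
      · rw [Nat.div_lt_iff_lt_mul (show 0 < s+1 by omega),
          show (s^2+1)*(s+1) = s^3+s^2+s+1 by ring]
        exact hA
      · simp only [Fin.val_mk]
        refine congrArg (β ^ ·) ?_
        rw [Nat.mul_comm]
        exact hd.symm
  · -- pairwise disjoint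
    intro i i' hne
    rw [Set.disjoint_left]
    rintro x hx hx'
    rw [hC] at hx hx'
    obtain ⟨j, hj, rfl⟩ := hx
    obtain ⟨j', hj', heq⟩ := hx'
    have hi := i.isLt
    have hi' := i'.isLt
    have h1 : j*(s+1) ≤ s^2*(s+1) := Nat.mul_le_mul_right (s+1) (by omega)
    have h1' : j'*(s+1) ≤ s^2*(s+1) := Nat.mul_le_mul_right (s+1) (by omega)
    have h2 : s^2*(s+1) = s^3+s^2 := by ring
    have hb1 : j*(s+1) + (i:ℕ) < s^4 - 1 := by omega
    have hb2 : j'*(s+1) + (i':ℕ) < s^4 - 1 := by omega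
    have heq2 := ebert_pow_inj hβ0 hβ hb1 hb2 heq
    have hmod := congrArg (· % (s+1)) heq2
    have e1 : (j*(s+1) + (i:ℕ)) % (s+1) = (i:ℕ) := by
      rw [Nat.add_comm, Nat.add_mul_mod_self_right, Nat.mod_eq_of_lt hi]
    have e2 : (j'*(s+1) + (i':ℕ)) % (s+1) = (i':ℕ) := by
      rw [Nat.add_comm, Nat.add_mul_mod_self_right, Nat.mod_eq_of_lt hi']
    rw [e1, e2] at hmod
    exact hne (Fin.val_injective hmod)
  · -- caps
    intro i x y z hx hy hz hxy hxz hyz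
    rw [hC] at hx hy hz
    obtain ⟨j1, hj1, rfl⟩ := hx
    obtain ⟨j2, hj2, rfl⟩ := hy
    obtain ⟨j3, hj3, rfl⟩ := hz
    have h12 : j1 ≠ j2 := fun h => hxy (by rw [h])
    have h13 : j1 ≠ j3 := fun h => hxz (by rw [h])
    have h23 : j2 ≠ j3 := fun h => hyz (by rw [h])
    rw [Fintype.linearIndependent_iff]
    intro f hf
    simp only [Fin.sum_univ_three, Matrix.cons_val_zero, Matrix.cons_val_one,
      Matrix.head_cons, Matrix.cons_val_two, Matrix.tail_cons,
      Algebra.smul_def, pow_add] at hf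
    have hfac : ((algebraMap K F (f 0)) * β^(j1*(s+1)) +
        (algebraMap K F (f 1)) * β^(j2*(s+1)) +
        (algebraMap K F (f 2)) * β^(j3*(s+1))) * β^(i:ℕ) = 0 := by
      linear_combination hf
    have hf' := (mul_eq_zero.mp hfac).resolve_right (pow_ne_zero _ hβ0)
    have hres := ebert_key s hs2 hβ0 hβ frob hj1 hj2 hj3 h12 h13 h23
      (hfixK (f 0)) (hfixK (f 1)) (hfixK (f 2)) hf'
    have inj := (algebraMap K F).injective
    intro idx
    fin_cases idx
    · exact inj (by rw [map_zero]; exact hres.1)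
    · exact inj (by rw [map_zero]; exact hres.2.1)
    · exact inj (by rw [map_zero]; exact hres.2.2)
end

section
/- Let A be an r × c difference scheme over GF(s) and B an OA(N,n,s,3), and form D = A ⊕ B (Kronecker sum). Fix three columns of D coming from B-columns v₁, v₂, v₃ that are pairwise distinct (and any A-columns j₁, j₂, j₃). Then for each triple (a,b,c) ∈ GF(s)³, the number of row pairs (i,u) with A[i,j₁]+B[u,v₁]=a, A[i,j₂]+B[u,v₂]=b, A[i,j₃]+B[u,v₃]=c equals Nr/s³. -/
/-- In D = A ⊕ B with A a difference scheme DS(r,c,s) and B an OA(N,n,s,3): for three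
columns of D with pairwise distinct B-indices v₁, v₂, v₃ (and any A-indices j₁,j₂,j₃),
every triple (a,b,e) ∈ GF(s)³ is realized by exactly Nr/s³ rows. -/
theorem stmt_15 (s r c N n : ℕ) (F : Type*) [Field F] [Fintype F] [DecidableEq F]
    (hF : Fintype.card F = s)
    (A : Matrix (Fin r) (Fin c) F)
    (hA : ∀ j j' : Fin c, j ≠ j' → ∀ d : F,
      (Finset.univ.filter (fun i => A i j - A i j' = d)).card * s = r)
    (B : Matrix (Fin N) (Fin n) F)
    (hB : ∀ v₁ v₂ v₃ : Fin n, v₁ ≠ v₂ → v₁ ≠ v₃ → v₂ ≠ v₃ → ∀ a b e : F,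
      (Finset.univ.filter (fun u =>
        B u v₁ = a ∧ B u v₂ = b ∧ B u v₃ = e)).card * s ^ 3 = N)
    (j₁ j₂ j₃ : Fin c) (v₁ v₂ v₃ : Fin n)
    (h12 : v₁ ≠ v₂) (h13 : v₁ ≠ v₃) (h23 : v₂ ≠ v₃)
    (a b e : F) :
    (Finset.univ.filter (fun x : Fin r × Fin N =>
      A x.1 j₁ + B x.2 v₁ = a ∧ A x.1 j₂ + B x.2 v₂ = b ∧
        A x.1 j₃ + B x.2 v₃ = e)).card * s ^ 3 = N * r := by
  have key : (Finset.univ.filter (fun x : Fin r × Fin N =>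
      A x.1 j₁ + B x.2 v₁ = a ∧ A x.1 j₂ + B x.2 v₂ = b ∧
        A x.1 j₃ + B x.2 v₃ = e)).card
      = ∑ i : Fin r, (Finset.univ.filter (fun u : Fin N =>
        B u v₁ = a - A i j₁ ∧ B u v₂ = b - A i j₂ ∧ B u v₃ = e - A i j₃)).card := by
    rw [Finset.card_filter]
    rw [Fintype.sum_prod_type]
    refine Finset.sum_congr rfl fun i _ => ?_
    rw [Finset.card_filter]
    refine Finset.sum_congr rfl fun u _ => ?_
    congr 1
    simp only [eq_iff_iff, eq_sub_iff_add_eq']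
  rw [key, Finset.sum_mul]
  have : ∀ i : Fin r, (Finset.univ.filter (fun u : Fin N =>
        B u v₁ = a - A i j₁ ∧ B u v₂ = b - A i j₂ ∧ B u v₃ = e - A i j₃)).card * s ^ 3 = N :=
    fun i => hB v₁ v₂ v₃ h12 h13 h23 _ _ _
  simp [this, Finset.sum_const, mul_comm]
end

section
/- Let s be an odd prime power. Consider the 3 × 2s matrix over GF(s) whose columns are (1, ω_i, ω_i²)^T and (1, ω_i, ω + ω_i²)^T for all ω_i ∈ GF(s), where ω ∈ GF(s) is a fixed nonzero element. Then any two columns of this matrix are linearly independent over GF(s); hence the regular array generated by it is an OA(s³, 2s, s, 2). -/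
/-!
Every column has first coordinate `1`, so two columns are proportional only if they are equal,
and distinct parameters give distinct columns because `ω ≠ 0`. Hence any two columns are the
linearly independent rows of a `2 × 3` matrix `M`; the map `x ↦ M x` is then onto `GF(s)²`,
and all fibres of a surjective additive map have the same size, namely `s³ / s²`.
-/

open Finset

theorem AddMonoidHom.card_fiber_mul_card_of_surjective {G N : Type*} [AddGroup G] [Fintype G]
    [AddMonoid N] [Fintype N] [DecidableEq N] (f : G →+ N) (hf : Function.Surjective f) (y : N) :
    #{g | f g = y} * Fintype.card N = Fintype.card G := by
  have hfiber (z : N) : #{g | f g = z} = #{g | f g = y} :=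
    card_fiber_eq_of_mem_range f (hf z) (hf y)
  calc #{g | f g = y} * Fintype.card N = ∑ z : N, #{g | f g = z} := by simp [hfiber, mul_comm]
    _ = Fintype.card G := (card_eq_sum_card_fiberwise (by simp)).symm

theorem Matrix.mulVec_surjective_of_linearIndependent_row {K m n : Type*} [Field K]
    [Fintype m] [Fintype n] {M : Matrix m n K} (h : LinearIndependent K M.row) :
    Function.Surjective M.mulVec := by
  have hrange : LinearMap.range M.mulVecLin = ⊤ := by
    apply Submodule.eq_top_of_finrank_eq
    rw [← Matrix.rank, h.rank_matrix, Module.finrank_fintype_fun_eq_card]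
  exact LinearMap.range_eq_top.mp hrange

theorem LinearIndependent.pair_of_ne_of_map_eq {K V : Type*} [Field K] [AddCommGroup V]
    [Module K V] (φ : V →ₗ[K] K) {v w : V} (hφ : φ v = φ w) (hφv : φ v ≠ 0) (hvw : v ≠ w) :
    LinearIndependent K ![v, w] := by
  rw [LinearIndependent.pair_iff]
  intro s t hst
  have hts : t = -s := by
    have := congrArg φ hst
    rw [map_add, map_smul, map_smul, ← hφ, smul_eq_mul, smul_eq_mul, map_zero, ← add_mul] at this
    linear_combination (mul_eq_zero.mp this).resolve_right hφv
  have hs : s = 0 := by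
    rw [hts, neg_smul, ← sub_eq_add_neg, ← smul_sub] at hst
    exact (smul_eq_zero.mp hst).resolve_right (sub_ne_zero.mpr hvw)
  exact ⟨hs, by rw [hts, hs, neg_zero]⟩

section ConicColumn

variable {F : Type*} [Field F]

def conicColumn (ω : F) : F ⊕ F → Fin 3 → F :=
  Sum.elim (fun t => ![1, t, t ^ 2]) (fun t => ![1, t, ω + t ^ 2])

theorem conicColumn_apply_zero (ω : F) (c : F ⊕ F) : conicColumn ω c 0 = 1 := by
  cases c <;> rfl

theorem conicColumn_injective {ω : F} (hω : ω ≠ 0) : Function.Injective (conicColumn ω) := by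
  rintro (t | t) (t' | t') h <;>
    obtain rfl : t = t' := by simpa [conicColumn] using congrFun h 1
  · rfl
  · exact absurd (by simpa [conicColumn] using congrFun h 2) hω
  · exact absurd (by simpa [conicColumn] using (congrFun h 2).symm) hω
  · rfl

end ConicColumn

theorem stmt_16_general (F : Type*) [Field F] [Fintype F] [DecidableEq F]
    (ω : F) (hω : ω ≠ 0)
    (col : F ⊕ F → (Fin 3 → F))
    (hcol : ∀ t : F, col (Sum.inl t) = ![1, t, t ^ 2] ∧
      col (Sum.inr t) = ![1, t, ω + t ^ 2]) :
    (∀ c₁ c₂ : F ⊕ F, c₁ ≠ c₂ → LinearIndependent F ![col c₁, col c₂]) ∧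
    (∀ c₁ c₂ : F ⊕ F, c₁ ≠ c₂ → ∀ a b : F,
      (Finset.univ.filter (fun x : Fin 3 → F =>
        (∑ i, x i * col c₁ i) = a ∧ (∑ i, x i * col c₂ i) = b)).card
          * Fintype.card F ^ 2 = Fintype.card F ^ 3) := by
  obtain rfl : col = conicColumn ω :=
    funext fun c => c.rec (fun t => (hcol t).1) (fun t => (hcol t).2)
  have hindep (c₁ c₂ : F ⊕ F) (hne : c₁ ≠ c₂) :
      LinearIndependent F ![conicColumn ω c₁, conicColumn ω c₂] :=
    .pair_of_ne_of_map_eq (LinearMap.proj 0) (by simp [conicColumn_apply_zero])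
      (by simp [conicColumn_apply_zero]) ((conicColumn_injective hω).ne hne)
  refine ⟨hindep, fun c₁ c₂ hne a b => ?_⟩
  let M : Matrix (Fin 2) (Fin 3) F := .of ![conicColumn ω c₁, conicColumn ω c₂]
  have hfilter : Finset.univ.filter (fun x : Fin 3 → F =>
      (∑ i, x i * conicColumn ω c₁ i) = a ∧ (∑ i, x i * conicColumn ω c₂ i) = b) =
      Finset.univ.filter (fun x => M.mulVecLin.toAddMonoidHom x = ![a, b]) := by
    ext x
    simp [M, dotProduct, funext_iff, Fin.forall_fin_two, mul_comm]
  rw [hfilter]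
  simpa using AddMonoidHom.card_fiber_mul_card_of_surjective M.mulVecLin.toAddMonoidHom
    (Matrix.mulVec_surjective_of_linearIndependent_row (hindep c₁ c₂ hne)) ![a, b]

/-- For s an odd prime power and ω ≠ 0 in GF(s), the 2s columns (1, t, t²) and
(1, t, ω + t²), t ∈ GF(s), are pairwise linearly independent over GF(s); hence the
regular array they generate is an OA(s³, 2s, s, 2): any two distinct columns contain
each pair of GF(s)² exactly s times. -/
theorem stmt_16 (F : Type*) [Field F] [Fintype F] [DecidableEq F]
    (hodd : Odd (Fintype.card F))
    (ω : F) (hω : ω ≠ 0)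
    (col : F ⊕ F → (Fin 3 → F))
    (hcol : ∀ t : F, col (Sum.inl t) = ![1, t, t ^ 2] ∧
      col (Sum.inr t) = ![1, t, ω + t ^ 2]) :
    (∀ c₁ c₂ : F ⊕ F, c₁ ≠ c₂ → LinearIndependent F ![col c₁, col c₂]) ∧
    (∀ c₁ c₂ : F ⊕ F, c₁ ≠ c₂ → ∀ a b : F,
      (Finset.univ.filter (fun x : Fin 3 → F =>
        (∑ i, x i * col c₁ i) = a ∧ (∑ i, x i * col c₂ i) = b)).card
          * Fintype.card F ^ 2 = Fintype.card F ^ 3) :=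
  stmt_16_general F ω hω col hcol
end

section
/- Let A be an r × c difference scheme over GF(s) where r is not a multiple of s², and let B be an OA(N, n, s, 3). In D = A ⊕ B, any three columns (j₁,v), (j₂,v), (j₃,v) sharing the same B-column v with j₁, j₂, j₃ distinct do NOT have strength 3. -/
/-- In D = A ⊕ B with A a difference scheme DS(r,c,s) where r is not a multiple of s²,
and B an OA(N,n,s,3) with N > 0: three columns (j₁,v), (j₂,v), (j₃,v) sharing the same
B-column v, with j₁, j₂, j₃ distinct, do NOT have strength 3, i.e. it fails that every
triple of GF(s)³ occurs exactly Nr/s³ times. -/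
theorem stmt_18 (s r c N n : ℕ) (F : Type*) [Field F] [Fintype F] [DecidableEq F]
    (hF : Fintype.card F = s)
    (A : Matrix (Fin r) (Fin c) F)
    (hA : ∀ j j' : Fin c, j ≠ j' → ∀ d : F,
      (Finset.univ.filter (fun i => A i j - A i j' = d)).card * s = r)
    (hr : ¬ s ^ 2 ∣ r)
    (B : Matrix (Fin N) (Fin n) F) (hn : 3 ≤ n) (hN : 0 < N)
    (hB : ∀ v₁ v₂ v₃ : Fin n, v₁ ≠ v₂ → v₁ ≠ v₃ → v₂ ≠ v₃ → ∀ a b e : F,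
      (Finset.univ.filter (fun u =>
        B u v₁ = a ∧ B u v₂ = b ∧ B u v₃ = e)).card * s ^ 3 = N)
    (j₁ j₂ j₃ : Fin c) (hj12 : j₁ ≠ j₂) (hj13 : j₁ ≠ j₃) (hj23 : j₂ ≠ j₃)
    (v : Fin n) :
    ¬ ∀ a b e : F,
      (Finset.univ.filter (fun x : Fin r × Fin N =>
        A x.1 j₁ + B x.2 v = a ∧ A x.1 j₂ + B x.2 v = b ∧
          A x.1 j₃ + B x.2 v = e)).card * s ^ 3 = N * r := by
  intro h
  have hs : 0 < s := hF ▸ Fintype.card_pos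
  set T := Finset.univ.filter (fun i : Fin r => A i j₁ = A i j₂ ∧ A i j₂ = A i j₃) with hT
  have inner : ∀ x : Fin r × Fin N,
      (∑ a : F, if A x.1 j₁ + B x.2 v = a ∧ A x.1 j₂ + B x.2 v = a ∧
          A x.1 j₃ + B x.2 v = a then 1 else 0)
      = if A x.1 j₁ = A x.1 j₂ ∧ A x.1 j₂ = A x.1 j₃ then 1 else 0 := by
    intro x
    by_cases hx : A x.1 j₁ = A x.1 j₂ ∧ A x.1 j₂ = A x.1 j₃
    · rw [if_pos hx, Finset.sum_eq_single (A x.1 j₁ + B x.2 v)]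
      · rw [if_pos ⟨rfl, by rw [← hx.1], by rw [← hx.2, ← hx.1]⟩]
      · intro a _ ha
        rw [if_neg]
        rintro ⟨h1, -, -⟩
        exact ha h1.symm
      · intro hmem; exact absurd (Finset.mem_univ _) hmem
    · rw [if_neg hx]
      apply Finset.sum_eq_zero
      intro a _
      rw [if_neg]
      rintro ⟨h1, h2, h3⟩
      exact hx ⟨add_right_cancel (h1.trans h2.symm), add_right_cancel (h2.trans h3.symm)⟩
  have sum_eq : ∑ a : F, (Finset.univ.filter (fun x : Fin r × Fin N =>
      A x.1 j₁ + B x.2 v = a ∧ A x.1 j₂ + B x.2 v = a ∧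
        A x.1 j₃ + B x.2 v = a)).card = T.card * N := by
    simp only [Finset.card_filter]
    rw [Finset.sum_comm]
    have : ∀ x : Fin r × Fin N, True := fun _ => trivial
    calc (∑ x : Fin r × Fin N, ∑ a : F, if A x.1 j₁ + B x.2 v = a ∧ A x.1 j₂ + B x.2 v = a ∧
            A x.1 j₃ + B x.2 v = a then 1 else 0)
        = ∑ x : Fin r × Fin N, if A x.1 j₁ = A x.1 j₂ ∧ A x.1 j₂ = A x.1 j₃ then 1 else 0 := by
          exact Finset.sum_congr rfl fun x _ => inner x
      _ = ∑ i : Fin r, ∑ u : Fin N, if A i j₁ = A i j₂ ∧ A i j₂ = A i j₃ then 1 else 0 := by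
          rw [Fintype.sum_prod_type]
      _ = (∑ i : Fin r, if A i j₁ = A i j₂ ∧ A i j₂ = A i j₃ then 1 else 0) * N := by
          rw [Finset.sum_mul]
          exact Finset.sum_congr rfl fun i _ => by
            rw [Finset.sum_const, Finset.card_univ, Fintype.card_fin, smul_eq_mul, mul_comm]
      _ = T.card * N := by rw [hT, Finset.card_filter]
  have key : T.card * N * s ^ 3 = s * (N * r) := by
    calc T.card * N * s ^ 3
        = (∑ a : F, (Finset.univ.filter (fun x : Fin r × Fin N =>
            A x.1 j₁ + B x.2 v = a ∧ A x.1 j₂ + B x.2 v = a ∧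
              A x.1 j₃ + B x.2 v = a)).card) * s ^ 3 := by rw [sum_eq]
      _ = ∑ a : F, (Finset.univ.filter (fun x : Fin r × Fin N =>
            A x.1 j₁ + B x.2 v = a ∧ A x.1 j₂ + B x.2 v = a ∧
              A x.1 j₃ + B x.2 v = a)).card * s ^ 3 := by rw [Finset.sum_mul]
      _ = ∑ a : F, N * r := Finset.sum_congr rfl fun a _ => h a a a
      _ = s * (N * r) := by rw [Finset.sum_const, Finset.card_univ, hF, smul_eq_mul]
  apply hr
  refine ⟨T.card, ?_⟩
  have h1 : N * (T.card * s ^ 3) = N * (s * r) := by ring_nf; ring_nf at key; linarith [key]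
  have h2 : T.card * s ^ 3 = s * r := Nat.eq_of_mul_eq_mul_left hN h1
  have h3 : s * (s ^ 2 * T.card) = s * r := by ring_nf; ring_nf at h2; linarith [h2]
  exact (Nat.eq_of_mul_eq_mul_left hs h3).symm
end
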